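/- Let y : [0, T] → ℝ be continuous, differentiable on (0, T), with y ≥ 0, and suppose (1/2) y'(t) + g(t) ≤ √(r(t)) · √(y(t) + g(t)) for nonnegative integrable functions g, r on (0,T). Then for all t ∈ [0, T]: y(t) + ∫₀ᵗ g(s) ds ≤ e^t ( y(0) + ∫₀ᵗ r(s) ds ). -/

import Mathlib

/-!
By AM-GM, `√r √(y + g) ≤ (r + y + g) / 2`, so the hypothesis gives `y' - y ≤ r - g`. Hence
`(e^{-s} y)' ≤ e^{-s} (r - g)`, and integrating over `[0, t]` together with
`e^{-t} ≤ e^{-s} ≤ 1` yields `e^{-t} (y(t) + ∫₀ᵗ g) ≤ y(0) + ∫₀ᵗ r`.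
-/

open MeasureTheory Set Real

theorem sub_le_sub_of_half_add_le_sqrt_mul_sqrt {a y g r : ℝ} (hr : 0 ≤ r) (hyg : 0 ≤ y + g)
    (h : 1 / 2 * a + g ≤ √r * √(y + g)) : a - y ≤ r - g := by
  have amgm := two_mul_le_add_sq (√r) (√(y + g))
  rw [sq_sqrt hr, sq_sqrt hyg] at amgm
  linarith

theorem exp_neg_mul_sub_le_integral_of_deriv_sub_le {y y' f : ℝ → ℝ} {a b : ℝ} (hab : a ≤ b)
    (hy : ContinuousOn y (Icc a b)) (hy' : ∀ s ∈ Ioo a b, HasDerivAt y (y' s) s)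
    (hf : IntegrableOn f (Icc a b)) (hle : ∀ s ∈ Ioo a b, y' s - y s ≤ f s) :
    exp (-b) * y b - exp (-a) * y a ≤ ∫ s in a..b, exp (-s) * f s := by
  have hexp : Continuous fun s : ℝ => exp (-s) := by fun_prop
  refine intervalIntegral.sub_le_integral_of_hasDeriv_right_of_le hab
    (hexp.continuousOn.mul hy) (fun s hs => ?_)
    (hf.continuousOn_mul hexp.continuousOn isCompact_Icc)
    (fun s hs => mul_le_mul_of_nonneg_left (hle s hs) (exp_pos _).le)
  have hderiv := ((hasDerivAt_neg s).exp).mul (hy' s hs)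
  exact (hderiv.congr_deriv (by ring)).hasDerivWithinAt

theorem integral_exp_neg_mul_sub_le {g r : ℝ → ℝ} {t : ℝ} (ht : 0 ≤ t)
    (hg : IntegrableOn g (Icc 0 t)) (hg0 : ∀ s ∈ Icc 0 t, 0 ≤ g s)
    (hr : IntegrableOn r (Icc 0 t)) (hr0 : ∀ s ∈ Icc 0 t, 0 ≤ r s) :
    ∫ s in (0 : ℝ)..t, exp (-s) * (r s - g s)
      ≤ (∫ s in (0 : ℝ)..t, r s) - exp (-t) * ∫ s in (0 : ℝ)..t, g s := by
  have hg' := (intervalIntegrable_iff_integrableOn_Icc_of_le ht).2 hg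
  have hr' := (intervalIntegrable_iff_integrableOn_Icc_of_le ht).2 hr
  rw [← intervalIntegral.integral_const_mul, ← intervalIntegral.integral_sub hr' (hg'.const_mul _)]
  refine intervalIntegral.integral_mono_on ht ?_ (hr'.sub (hg'.const_mul _)) fun s hs => ?_
  · exact (intervalIntegrable_iff_integrableOn_Icc_of_le ht).2
      ((hr.sub hg).continuousOn_mul (by fun_prop) isCompact_Icc)
  have hr_le : exp (-s) * r s ≤ r s :=
    mul_le_of_le_one_left (hr0 s hs) (exp_le_one_iff.2 (by linarith [hs.1]))
  have hg_le : exp (-t) * g s ≤ exp (-s) * g s :=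
    mul_le_mul_of_nonneg_right (exp_le_exp.2 (by linarith [hs.2])) (hg0 s hs)
  linarith [mul_sub (exp (-s)) (r s) (g s)]

open MeasureTheory in
theorem stmt_16_general (T : ℝ) (y y' g r : ℝ → ℝ)
    (hycont : ContinuousOn y (Set.Icc 0 T))
    (hyderiv : ∀ t ∈ Set.Ioo 0 T, HasDerivAt y (y' t) t)
    (hynonneg : ∀ t ∈ Set.Icc 0 T, 0 ≤ y t)
    (hg : IntegrableOn g (Set.Icc 0 T)) (hgnonneg : ∀ t ∈ Set.Icc 0 T, 0 ≤ g t)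
    (hr : IntegrableOn r (Set.Icc 0 T)) (hrnonneg : ∀ t ∈ Set.Icc 0 T, 0 ≤ r t)
    (hineq : ∀ t ∈ Set.Ioo 0 T,
      (1 / 2) * y' t + g t ≤ Real.sqrt (r t) * Real.sqrt (y t + g t)) :
    ∀ t ∈ Set.Icc 0 T,
      y t + (∫ s in (0:ℝ)..t, g s) ≤ Real.exp t * (y 0 + ∫ s in (0:ℝ)..t, r s) := by
  intro t ⟨ht0, htT⟩
  have hIcc : Icc 0 t ⊆ Icc 0 T := Icc_subset_Icc_right htT
  have hIoo : Ioo 0 t ⊆ Ioo 0 T := Ioo_subset_Ioo_right htT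
  have hdiff : ∀ s ∈ Ioo 0 t, y' s - y s ≤ r s - g s := fun s hs =>
    have hs' : s ∈ Icc 0 T := Ioo_subset_Icc_self (hIoo hs)
    sub_le_sub_of_half_add_le_sqrt_mul_sqrt (hrnonneg s hs')
      (add_nonneg (hynonneg s hs') (hgnonneg s hs')) (hineq s (hIoo hs))
  have hweighted := exp_neg_mul_sub_le_integral_of_deriv_sub_le (f := fun s => r s - g s)
    ht0 (hycont.mono hIcc) (fun s hs => hyderiv s (hIoo hs)) ((hr.mono_set hIcc).sub (hg.mono_set hIcc)) hdiff
  have hintegral := integral_exp_neg_mul_sub_le ht0 (hg.mono_set hIcc)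
    (fun s hs => hgnonneg s (hIcc hs)) (hr.mono_set hIcc) (fun s hs => hrnonneg s (hIcc hs))
  rw [neg_zero, exp_zero, one_mul] at hweighted
  rw [← inv_mul_le_iff₀ (exp_pos t), ← exp_neg, mul_add]
  linarith

open MeasureTheory in
theorem stmt_16 (T : ℝ) (hT : 0 < T) (y y' g r : ℝ → ℝ)
    (hycont : ContinuousOn y (Set.Icc 0 T))
    (hyderiv : ∀ t ∈ Set.Ioo 0 T, HasDerivAt y (y' t) t)
    (hynonneg : ∀ t ∈ Set.Icc 0 T, 0 ≤ y t)
    (hg : IntegrableOn g (Set.Icc 0 T)) (hgnonneg : ∀ t ∈ Set.Icc 0 T, 0 ≤ g t)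
    (hr : IntegrableOn r (Set.Icc 0 T)) (hrnonneg : ∀ t ∈ Set.Icc 0 T, 0 ≤ r t)
    (hineq : ∀ t ∈ Set.Ioo 0 T,
      (1 / 2) * y' t + g t ≤ Real.sqrt (r t) * Real.sqrt (y t + g t)) :
    ∀ t ∈ Set.Icc 0 T,
      y t + (∫ s in (0:ℝ)..t, g s) ≤ Real.exp t * (y 0 + ∫ s in (0:ℝ)..t, r s) :=
  stmt_16_general T y y' g r hycont hyderiv hynonneg hg hgnonneg hr hrnonneg hineq
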